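/- Let π^G be a partial envy-free orientation of a bi-valued symmetric multigraph G (weights α > β ≥ 0) such that every heavy edge is oriented, the set M of unoriented edges is a matching in G, and π^G is privately envy-free between the two endvertices of every unoriented edge. Then there exists an extension π of π^G that orients all edges of M and is an EFX orientation of G. -/

import Mathlib

/-- Bundle of an agent under a partial orientation. -/
def bundleP {V E : Type*} [Fintype E] [DecidableEq V] [DecidableEq E]
    (π : E → Option V) (i : V) : Finset E :=
  Finset.univ.filter (fun e => π e = some i)

/-- Bundle of an agent under a total orientation. -/
def bundleT {V E : Type*} [Fintype E] [DecidableEq V] [DecidableEq E]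
    (π : E → V) (i : V) : Finset E :=
  Finset.univ.filter (fun e => π e = i)

/-- Additive utility: an agent values an edge at its weight iff incident. -/
def util {V E : Type*} [DecidableEq V] (ends : E → V × V) (w : E → ℝ)
    (i : V) (S : Finset E) : ℝ :=
  ∑ e ∈ S, if (ends e).1 = i ∨ (ends e).2 = i then w e else 0

/-- The set of (non-loop) edges between two distinct vertices. -/
def edgesBetween {V E : Type*} [Fintype E] [DecidableEq V] [DecidableEq E]
    (ends : E → V × V) (i j : V) : Finset E :=
  Finset.univ.filter (fun e => ends e = (i, j) ∨ ends e = (j, i))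

/-- A vertex is an endvertex of an edge. -/
def incid {V E : Type*} (ends : E → V × V) (i : V) (e : E) : Prop :=
  (ends e).1 = i ∨ (ends e).2 = i

/-!
The matching edges are light, and by envy-freeness an agent `i` can only come to envy `j` if
`j` receives the matching edge `m` between them. By private envy-freeness, `i` values the old
bundle of `j` exactly as `i`'s own edges towards `j`, so `i` envies `j` by at most the light
weight `β` of `m`. Removing any edge of `j`'s new bundle erases this envy as soon as every edge
of `j` is incident to `i` (each is then worth at least `β` to `i`), or as soon as `i` owns an edge
not going to `j` (worth at least `β` to `i` on top of `i`'s private share). Orienting each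
matching edge towards an endvertex for which one of these two conditions holds, which always
exists, therefore gives an EFX orientation.
-/

section BiValued

variable {E : Type*} {heavy : E → Bool} {α β : ℝ} {w : E → ℝ}

lemma weight_nonneg (hβ : 0 ≤ β) (hαβ : β < α) (hw : ∀ e, w e = if heavy e then α else β)
    (e : E) : 0 ≤ w e := by
  rw [hw]
  split_ifs <;> linarith

lemma weight_le_of_light (hαβ : β < α) (hw : ∀ e, w e = if heavy e then α else β) {m : E}
    (hm : heavy m = false) (e : E) : w m ≤ w e := by
  rw [hw m, hw e, hm, if_neg Bool.false_ne_true]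
  split_ifs <;> linarith

end BiValued

section Utility

variable {V E : Type*} [DecidableEq V] {ends : E → V × V} {w : E → ℝ} {i : V}
  {S T : Finset E} {e : E}

lemma util_mono (hw : ∀ e, 0 ≤ w e) (h : S ⊆ T) : util ends w i S ≤ util ends w i T :=
  Finset.sum_le_sum_of_subset_of_nonneg h fun e _ _ => by split_ifs <;> simp [hw e]

lemma util_nonneg (hw : ∀ e, 0 ≤ w e) : 0 ≤ util ends w i S :=
  Finset.sum_nonneg fun e _ => by split_ifs <;> simp [hw e]

lemma util_singleton_of_incid (h : incid ends i e) : util ends w i {e} = w e := by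
  simp only [util, Finset.sum_singleton]
  exact if_pos h

lemma util_singleton_le (hw : ∀ e, 0 ≤ w e) : util ends w i {e} ≤ w e := by
  simp only [util, Finset.sum_singleton]
  split_ifs <;> simp [hw e]

variable [DecidableEq E]

def StronglyEnvies (ends : E → V × V) (w : E → ℝ) (i : V) (A B : Finset E) : Prop :=
  ∃ e ∈ B, util ends w i A < util ends w i (B \ {e})

lemma util_insert (h : e ∉ S) :
    util ends w i (insert e S) = util ends w i {e} + util ends w i S := by
  simp only [util, Finset.sum_insert h, Finset.sum_singleton]

lemma util_sdiff_singleton_add (h : e ∈ S) :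
    util ends w i (S \ {e}) + util ends w i {e} = util ends w i S :=
  Finset.sum_sdiff (Finset.singleton_subset_iff.2 h)

lemma util_union_of_not_incid (h : ∀ e ∈ T, ¬ incid ends i e) :
    util ends w i (S ∪ T) = util ends w i S := by
  refine (Finset.sum_subset Finset.subset_union_left fun e he heS => if_neg ?_).symm
  rcases Finset.mem_union.1 he with he | he
  exacts [absurd he heS, h e he]

lemma util_inter_add_le (hw : ∀ e, 0 ≤ w e) (he : e ∈ S \ T) (hi : incid ends i e) :
    util ends w i (S ∩ T) + w e ≤ util ends w i S := by
  have hle : util ends w i {e} ≤ util ends w i (S \ T) :=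
    util_mono hw (Finset.singleton_subset_iff.2 he)
  rw [util_singleton_of_incid hi] at hle
  unfold util at hle ⊢
  rw [← Finset.sum_inter_add_sum_sdiff S T]
  gcongr

end Utility

section EdgesBetween

variable {V E : Type*} [Fintype E] [DecidableEq V] [DecidableEq E] {ends : E → V × V}
  {i j : V} {e : E}

lemma edgesBetween_comm (ends : E → V × V) (i j : V) :
    edgesBetween ends i j = edgesBetween ends j i := by
  ext e
  simp [edgesBetween, or_comm]

lemma mem_edgesBetween : e ∈ edgesBetween ends i j ↔ ends e = (i, j) ∨ ends e = (j, i) := by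
  simp [edgesBetween]

lemma incid_of_mem_edgesBetween (h : e ∈ edgesBetween ends i j) : incid ends i e := by
  rcases mem_edgesBetween.1 h with h | h <;> simp [incid, h]

lemma mem_edgesBetween_of_incid (hij : i ≠ j) (hi : incid ends i e) (hj : incid ends j e) :
    e ∈ edgesBetween ends i j := by
  rw [mem_edgesBetween]
  unfold incid at hi hj
  grind [Prod.ext_iff]

lemma util_inter_edgesBetween {w : E → ℝ} {S : Finset E} (hij : i ≠ j)
    (hS : ∀ e ∈ S, incid ends j e) :
    util ends w i (S ∩ edgesBetween ends i j) = util ends w i S := by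
  refine Finset.sum_subset Finset.inter_subset_left fun e he heS => if_neg fun hi => heS ?_
  exact Finset.mem_inter.2 ⟨he, mem_edgesBetween_of_incid hij hi (hS e he)⟩

end EdgesBetween

section Orientation

variable {V E : Type*} [Fintype E] [DecidableEq V]

def addedEdges (πG : E → Option V) (π : E → V) (x : V) : Finset E :=
  Finset.univ.filter fun e => πG e = none ∧ π e = x

lemma mem_addedEdges {πG : E → Option V} {π : E → V} {x : V} {e : E} :
    e ∈ addedEdges πG π x ↔ πG e = none ∧ π e = x := by
  simp [addedEdges]

section Matching

variable {ends : E → V × V} {πG : E → Option V} {π : E → V}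

lemma addedEdges_eq_empty (hπ : ∀ e, incid ends (π e) e)
    (hmatch : ∀ e e', πG e = none → πG e' = none → e ≠ e' →
      ∀ i : V, incid ends i e → ¬ incid ends i e')
    {m : E} {i j : V} (hm : m ∈ addedEdges πG π j)
    (hmi : incid ends i m) (hij : i ≠ j) : addedEdges πG π i = ∅ := by
  refine Finset.eq_empty_of_forall_notMem fun e he => ?_
  obtain ⟨hmG, hmj⟩ := mem_addedEdges.1 hm
  obtain ⟨heG, hei⟩ := mem_addedEdges.1 he
  have hne : e ≠ m := by
    rintro rfl
    exact hij (hei.symm.trans hmj)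
  exact hmatch e m heG hmG hne i (hei ▸ hπ e) hmi

lemma addedEdges_eq_singleton [DecidableEq E] (hπ : ∀ e, incid ends (π e) e)
    (hmatch : ∀ e e', πG e = none → πG e' = none → e ≠ e' →
      ∀ i : V, incid ends i e → ¬ incid ends i e')
    {m : E} {x : V} (hm : m ∈ addedEdges πG π x) :
    addedEdges πG π x = {m} := by
  refine Finset.eq_singleton_iff_unique_mem.2 ⟨hm, fun e he => ?_⟩
  obtain ⟨hmG, hmx⟩ := mem_addedEdges.1 hm
  obtain ⟨heG, hex⟩ := mem_addedEdges.1 he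
  by_contra hne
  exact hmatch e m heG hmG hne x (hex ▸ hπ e) (hmx ▸ hπ m)

end Matching

variable [DecidableEq E] (ends : E → V × V) (w : E → ℝ) (πG : E → Option V)

def PrivatelyEnvyFree (a b : V) : Prop :=
  util ends w a (bundleP πG a ∩ edgesBetween ends a b)
      = util ends w a (bundleP πG b ∩ edgesBetween ends a b) ∧
    util ends w b (bundleP πG a ∩ edgesBetween ends a b)
      = util ends w b (bundleP πG b ∩ edgesBetween ends a b)

/-- Orienting the light edge `xy` towards `x` cannot make `y` strongly envy `x`. -/
def CanReceive (x y : V) : Prop :=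
  bundleP πG x ⊆ edgesBetween ends x y ∨ ¬ bundleP πG y ⊆ edgesBetween ends x y

instance (x y : V) : Decidable (CanReceive ends πG x y) := by
  unfold CanReceive
  infer_instance

def receiver (a b : V) : V :=
  if CanReceive ends πG a b then a else b

def extendOrientation (e : E) : V :=
  (πG e).getD (receiver ends πG (ends e).1 (ends e).2)

variable {ends w πG}

lemma PrivatelyEnvyFree.symm {a b : V} (h : PrivatelyEnvyFree ends w πG a b) :
    PrivatelyEnvyFree ends w πG b a := by
  unfold PrivatelyEnvyFree at h ⊢
  rw [edgesBetween_comm ends b a]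
  exact ⟨h.2.symm, h.1.symm⟩

lemma PrivatelyEnvyFree.of_ends {m : E} {i j : V}
    (h : PrivatelyEnvyFree ends w πG (ends m).1 (ends m).2)
    (hends : ends m = (i, j) ∨ ends m = (j, i)) : PrivatelyEnvyFree ends w πG i j := by
  rcases hends with hm | hm <;> rw [hm] at h
  exacts [h, h.symm]

lemma receiver_spec (a b : V) :
    (receiver ends πG a b = a ∧ CanReceive ends πG a b) ∨
      (receiver ends πG a b = b ∧ CanReceive ends πG b a) := by
  unfold receiver
  split_ifs with h
  · exact Or.inl ⟨rfl, h⟩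
  · refine Or.inr ⟨rfl, Or.inr ?_⟩
    rw [edgesBetween_comm ends b a]
    exact fun hsub => h (Or.inl hsub)

lemma extendOrientation_of_some {e : E} {v : V} (h : πG e = some v) :
    extendOrientation ends πG e = v := by
  simp [extendOrientation, h]

lemma incid_extendOrientation
    (horient : ∀ e v, πG e = some v → v = (ends e).1 ∨ v = (ends e).2) (e : E) :
    incid ends (extendOrientation ends πG e) e := by
  cases h : πG e with
  | none =>
    rcases receiver_spec (ends := ends) (πG := πG) (ends e).1 (ends e).2 with
      ⟨hr, -⟩ | ⟨hr, -⟩ <;> simp [extendOrientation, h, hr, incid]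
  | some v =>
    rw [extendOrientation_of_some h]
    exact (horient e v h).imp Eq.symm Eq.symm

lemma canReceive_of_extendOrientation_eq {m : E} {i j : V} (hm : πG m = none) (hij : i ≠ j)
    (hends : ends m = (i, j) ∨ ends m = (j, i)) (hmj : extendOrientation ends πG m = j) :
    CanReceive ends πG j i := by
  rcases hends with h | h <;> simp only [extendOrientation, hm, h, Option.getD_none] at hmj
  · rcases receiver_spec (ends := ends) (πG := πG) i j with ⟨hr, -⟩ | ⟨-, hc⟩
    exacts [absurd (hr.symm.trans hmj) hij, hc]
  · rcases receiver_spec (ends := ends) (πG := πG) j i with ⟨-, hc⟩ | ⟨hr, -⟩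
    exacts [hc, absurd (hr.symm.trans hmj) hij]

lemma incid_of_mem_bundleP
    (horient : ∀ e v, πG e = some v → v = (ends e).1 ∨ v = (ends e).2) {x : V} {e : E}
    (he : e ∈ bundleP πG x) : incid ends x e := by
  simp only [bundleP, Finset.mem_filter, Finset.mem_univ, true_and] at he
  exact (horient e x he).imp Eq.symm Eq.symm

lemma notMem_bundleP_of_eq_none {x : V} {e : E} (he : πG e = none) : e ∉ bundleP πG x := by
  simp [bundleP, he]

variable {π : E → V}

lemma bundleT_eq_union (hext : ∀ e v, πG e = some v → π e = v) (x : V) :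
    bundleT π x = bundleP πG x ∪ addedEdges πG π x := by
  ext e
  cases h : πG e with
  | none => simp [bundleT, bundleP, addedEdges, h]
  | some v => simp [bundleT, bundleP, addedEdges, h, hext e v h]

end Orientation

section Envy

variable {V E : Type*} [DecidableEq V] [DecidableEq E] {ends : E → V × V} {w : E → ℝ} {i : V}
  {A B F : Finset E}

lemma not_stronglyEnvies_of_util_le (hw : ∀ e, 0 ≤ w e)
    (h : util ends w i B ≤ util ends w i A) : ¬ StronglyEnvies ends w i A B := by
  rintro ⟨e, -, hlt⟩
  exact (util_mono hw Finset.sdiff_subset |>.trans h).not_gt hlt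

/-- The core estimate: `B` is the old bundle of the envied agent, `m` its newly received light
edge, and `A ∩ F` the part of the envier's own bundle that it values at least as much as `B`. -/
lemma not_stronglyEnvies_insert (hw : ∀ e, 0 ≤ w e) {m : E} (hmin : ∀ e, w m ≤ w e)
    (hm : m ∉ B) (hB : util ends w i B ≤ util ends w i (A ∩ F))
    (hgood : (∀ e ∈ B, incid ends i e) ∨ ∃ e ∈ A \ F, incid ends i e) :
    ¬ StronglyEnvies ends w i A (insert m B) := by
  rintro ⟨e, he, hlt⟩
  have hdel := util_sdiff_singleton_add (ends := ends) (w := w) (i := i) he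
  have hins := util_insert (ends := ends) (w := w) (i := i) hm
  have hAF : util ends w i (A ∩ F) ≤ util ends w i A := util_mono hw Finset.inter_subset_left
  have hm_le : util ends w i {m} ≤ w m := util_singleton_le hw
  rcases hgood with hinc | ⟨e', he', he'i⟩
  · have hme : util ends w i {m} ≤ util ends w i {e} := by
      rcases Finset.mem_insert.1 he with rfl | heB
      · exact le_rfl
      · rw [util_singleton_of_incid (hinc e heB)]
        exact hm_le.trans (hmin e)
    linarith
  · have hA := util_inter_add_le hw he' he'i
    have he_nonneg : 0 ≤ util ends w i {e} := util_nonneg hw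
    linarith [hmin e']

end Envy

section Extension

variable {V E : Type*} [Fintype E] [DecidableEq V] [DecidableEq E] {ends : E → V × V}
  {w : E → ℝ} {πG : E → Option V} {i j : V}

lemma not_stronglyEnvies_of_canReceive
    (horient : ∀ e v, πG e = some v → v = (ends e).1 ∨ v = (ends e).2)
    (hw : ∀ e, 0 ≤ w e) {m : E} (hmin : ∀ e, w m ≤ w e) (hm : m ∉ bundleP πG j)
    (hij : i ≠ j) (hpef : PrivatelyEnvyFree ends w πG i j) (hrec : CanReceive ends πG j i) :
    ¬ StronglyEnvies ends w i (bundleP πG i) (insert m (bundleP πG j)) := by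
  refine not_stronglyEnvies_insert (F := edgesBetween ends j i) hw hmin hm ?_ ?_
  · refine le_of_eq ?_
    calc util ends w i (bundleP πG j)
        = util ends w i (bundleP πG j ∩ edgesBetween ends i j) :=
          (util_inter_edgesBetween hij fun e he => incid_of_mem_bundleP horient he).symm
      _ = util ends w i (bundleP πG i ∩ edgesBetween ends j i) := by
          rw [← hpef.1, edgesBetween_comm]
  · rcases hrec with hsub | hnsub
    · exact Or.inl fun e he => incid_of_mem_edgesBetween (edgesBetween_comm ends j i ▸ hsub he)
    · obtain ⟨e, he, heF⟩ := Finset.not_subset.1 hnsub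
      exact Or.inr ⟨e, Finset.mem_sdiff.2 ⟨he, heF⟩, incid_of_mem_bundleP horient he⟩

end Extension

theorem stmt11_general {V E : Type*} [Fintype E] [DecidableEq V] [DecidableEq E]
    (ends : E → V × V) (heavy : E → Bool) (α β : ℝ) (hβ : 0 ≤ β) (hαβ : β < α)
    (w : E → ℝ) (hw : ∀ e, w e = if heavy e then α else β)
    (πG : E → Option V)
    (horient : ∀ e v, πG e = some v → v = (ends e).1 ∨ v = (ends e).2)
    (hEF : ∀ i j : V, util ends w i (bundleP πG j) ≤ util ends w i (bundleP πG i))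
    -- every heavy edge is oriented:
    (hheavy : ∀ e, heavy e = true → πG e ≠ none)
    -- the unoriented edges form a matching (no loops, pairwise disjoint):
    (hM2 : ∀ e e', πG e = none → πG e' = none → e ≠ e' →
        ∀ i : V, incid ends i e → ¬ incid ends i e')
    -- πG is PEF between the endvertices of every unoriented edge:
    (hPEF : ∀ e, πG e = none →
        (util ends w (ends e).1 (bundleP πG (ends e).1 ∩ edgesBetween ends (ends e).1 (ends e).2)
          = util ends w (ends e).1 (bundleP πG (ends e).2 ∩ edgesBetween ends (ends e).1 (ends e).2)) ∧
        (util ends w (ends e).2 (bundleP πG (ends e).1 ∩ edgesBetween ends (ends e).1 (ends e).2)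
          = util ends w (ends e).2 (bundleP πG (ends e).2 ∩ edgesBetween ends (ends e).1 (ends e).2))) :
    ∃ π : E → V,
      -- π is a complete orientation extending πG:
      (∀ e, π e = (ends e).1 ∨ π e = (ends e).2) ∧
      (∀ e v, πG e = some v → π e = v) ∧
      -- π is EFX: no vertex strongly envies another:
      (∀ i j : V, i ≠ j →
        ¬ ∃ e ∈ bundleT π j, util ends w i (bundleT π i) < util ends w i (bundleT π j \ {e})) := by
  have hw0 := weight_nonneg hβ hαβ hw
  set π := extendOrientation ends πG
  have hext : ∀ e v, πG e = some v → π e = v := fun _ _ => extendOrientation_of_some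
  have hπ : ∀ e, incid ends (π e) e := incid_extendOrientation horient
  refine ⟨π, fun e => (hπ e).imp Eq.symm Eq.symm, hext, fun i j hij => ?_⟩
  change ¬ StronglyEnvies ends w i (bundleT π i) (bundleT π j)
  rw [bundleT_eq_union hext i, bundleT_eq_union hext j]
  by_cases hnew : ∃ m ∈ addedEdges πG π j, incid ends i m
  · obtain ⟨m, hm, hmi⟩ := hnew
    obtain ⟨hmG, hmj⟩ := mem_addedEdges.1 hm
    have hends : ends m = (i, j) ∨ ends m = (j, i) :=
      mem_edgesBetween.1 (mem_edgesBetween_of_incid hij hmi (hmj ▸ hπ m))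
    have hlight : heavy m = false := Bool.eq_false_iff.2 fun h => hheavy m h hmG
    rw [addedEdges_eq_empty hπ hM2 hm hmi hij, addedEdges_eq_singleton hπ hM2 hm,
      Finset.union_empty, Finset.union_singleton]
    exact not_stronglyEnvies_of_canReceive horient hw0 (weight_le_of_light hαβ hw hlight)
      (notMem_bundleP_of_eq_none hmG) hij (PrivatelyEnvyFree.of_ends (hPEF m hmG) hends)
      (canReceive_of_extendOrientation_eq hmG hij hends hmj)
  · simp only [not_exists, not_and] at hnew
    refine not_stronglyEnvies_of_util_le hw0 ?_
    rw [util_union_of_not_incid hnew]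
    exact (hEF i j).trans (util_mono hw0 Finset.subset_union_left)

/-- let `πG` be a partial envy-free orientation of a bi-valued
symmetric multigraph in which all heavy edges are oriented, the unoriented
edges form a matching, and `πG` is privately envy-free between the endvertices
of every unoriented edge. Then `πG` extends to a (complete) EFX orientation. -/
theorem stmt11 {V E : Type*} [Fintype E] [DecidableEq V] [DecidableEq E]
    (ends : E → V × V) (heavy : E → Bool) (α β : ℝ) (hβ : 0 ≤ β) (hαβ : β < α)
    (w : E → ℝ) (hw : ∀ e, w e = if heavy e then α else β)
    (πG : E → Option V)
    (horient : ∀ e v, πG e = some v → v = (ends e).1 ∨ v = (ends e).2)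
    (hEF : ∀ i j : V, util ends w i (bundleP πG j) ≤ util ends w i (bundleP πG i))
    -- every heavy edge is oriented:
    (hheavy : ∀ e, heavy e = true → πG e ≠ none)
    -- the unoriented edges form a matching (no loops, pairwise disjoint):
    (hM1 : ∀ e, πG e = none → (ends e).1 ≠ (ends e).2)
    (hM2 : ∀ e e', πG e = none → πG e' = none → e ≠ e' →
        ∀ i : V, incid ends i e → ¬ incid ends i e')
    -- πG is PEF between the endvertices of every unoriented edge:
    (hPEF : ∀ e, πG e = none →
        (util ends w (ends e).1 (bundleP πG (ends e).1 ∩ edgesBetween ends (ends e).1 (ends e).2)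
          = util ends w (ends e).1 (bundleP πG (ends e).2 ∩ edgesBetween ends (ends e).1 (ends e).2)) ∧
        (util ends w (ends e).2 (bundleP πG (ends e).1 ∩ edgesBetween ends (ends e).1 (ends e).2)
          = util ends w (ends e).2 (bundleP πG (ends e).2 ∩ edgesBetween ends (ends e).1 (ends e).2))) :
    ∃ π : E → V,
      -- π is a complete orientation extending πG:
      (∀ e, π e = (ends e).1 ∨ π e = (ends e).2) ∧
      (∀ e v, πG e = some v → π e = v) ∧
      -- π is EFX: no vertex strongly envies another:
      (∀ i j : V, i ≠ j →
        ¬ ∃ e ∈ bundleT π j, util ends w i (bundleT π i) < util ends w i (bundleT π j \ {e})) :=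
  stmt11_general ends heavy α β hβ hαβ w hw πG horient hEF hheavy hM2 hPEF
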